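/- arXiv:2310.17223 — 2 statements merged into one kernel-verified Lean document; each statement's English description precedes it below -/
import Mathlib

section
/- Under the stated assumptions, for every threshold b > 0, with K = v/(μ^*(1 − q/w)) one has the explicit bound E[τ_b] ≤ (b + wμ + K + √(Kb) + √(Kwμ)) / (μ^*(1 − q/w)). -/
/-!
Let `C t = {τ_b > t}`, an antitone family of `G_t`-measurable events, and
`x_T = ∑_{t<T} P(C t)`, so that `E[τ_b] = sup_T x_T`. Integrating the lower drift bound over `C t`
and counting the at most `mq/w` exceptional indices among the first `m` gives
`μ^*(1 - q/w) x_T ≤ ∑_{t<T} E[Y_{w+1+t}; C t]`. Shrinking `C t` to `C (w+t)` costs at most `wμ`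
by the bound `E[Y_n | G_{n-1}] ≤ μ`, and `∑_{t<T} E[Y_{w+1+t}; C (w+t)]` is the expectation of the
partial sum stopped at `τ_b ∧ (w+T)`, which exceeds `b` by at most one increment. By AM-GM and the
second-moment bound that overshoot has expectation at most `(ε v x_T + ε⁻¹)/2` for every `ε > 0`,
hence at most `√(v x_T)`, and solving `μ^*(1 - q/w) x_T ≤ b + wμ + √(v x_T)` for `x_T` finishes.
-/

open MeasureTheory Filter Set
open _root_.Finset
open scoped ENNReal

lemma abs_le_half_mul_sq_add_inv (y : ℝ) {ε : ℝ} (hε : 0 < ε) : |y| ≤ (ε * y ^ 2 + ε⁻¹) / 2 := by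
  have h : ε * (|y| - ε⁻¹) ^ 2 = ε * y ^ 2 - 2 * |y| + ε⁻¹ := by
    rw [sub_sq, sq_abs]; field_simp
  nlinarith [mul_nonneg hε.le (sq_nonneg (|y| - ε⁻¹))]

lemma le_add_sqrt_of_forall_le_add_half {y a u : ℝ} (hu : 0 ≤ u)
    (h : ∀ ε > 0, y ≤ a + (ε * u + ε⁻¹) / 2) : y ≤ a + √u := by
  rcases hu.eq_or_lt with rfl | hu
  · refine le_of_forall_pos_le_add fun δ hδ => ?_
    simpa using h (2 * δ)⁻¹ (by positivity)
  · have hsu : 0 < √u := Real.sqrt_pos.2 hu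
    convert h (√u)⁻¹ (inv_pos.2 hsu) using 2
    rw [inv_inv, inv_mul_eq_div, Real.div_sqrt]
    ring

lemma mul_le_of_mul_le_add_add_sqrt {c v a₁ a₂ x : ℝ} (hc : 0 < c) (hv : 0 ≤ v) (ha₁ : 0 ≤ a₁)
    (ha₂ : 0 ≤ a₂) (hx : 0 ≤ x) (h : c * x ≤ a₁ + a₂ + √(v * x)) :
    c * x ≤ a₁ + a₂ + (v / c + √(v / c * a₁) + √(v / c * a₂)) := by
  set s := √(c * x)
  set r := √(v / c)
  have hs : s ^ 2 = c * x := Real.sq_sqrt (by positivity)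
  have hr : r ^ 2 = v / c := Real.sq_sqrt (by positivity)
  have hrs : r * s = √(v * x) := by
    rw [← Real.sqrt_mul (by positivity)]
    congr 1
    field_simp
  have hra₁ : r * √a₁ = √(v / c * a₁) := (Real.sqrt_mul (by positivity) a₁).symm
  have hra₂ : r * √a₂ = √(v / c * a₂) := (Real.sqrt_mul (by positivity) a₂).symm
  have h₁ : √a₁ ^ 2 = a₁ := Real.sq_sqrt ha₁
  have h₂ : √a₂ ^ 2 = a₂ := Real.sq_sqrt ha₂
  have hs_le : s ≤ r + √a₁ + √a₂ := by
    by_contra! hlt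
    have hd : 0 ≤ √a₁ + √a₂ := by positivity
    have hr0 : 0 ≤ r := Real.sqrt_nonneg _
    nlinarith [mul_pos (by linarith : 0 < s - (√a₁ + √a₂)) (by linarith : 0 < s - r),
      mul_nonneg hd (by linarith : 0 ≤ s - r - (√a₁ + √a₂)),
      mul_nonneg (Real.sqrt_nonneg a₁) (Real.sqrt_nonneg a₂)]
  nlinarith [Real.sqrt_nonneg (v / c)]

lemma sum_range_ite_le_of_antitone {p : ℕ → Prop} [DecidablePred p] (hp : Antitone p)
    {a : ℕ → ℝ} {c : ℝ} {T : ℕ} (ha : ∀ m ≤ T, c * m ≤ ∑ t ∈ range m, a t) :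
    ∑ t ∈ range T, (if p t then c else 0) ≤ ∑ t ∈ range T, if p t then a t else 0 := by
  induction T with
  | zero => simp
  | succ T ih =>
    by_cases hT : p T
    · have hall : ∀ t ∈ range (T + 1), p t := fun t ht => hp (Nat.lt_succ_iff.1 (mem_range.1 ht)) hT
      rw [sum_ite_of_true hall, sum_ite_of_true hall, sum_const, card_range, nsmul_eq_mul, mul_comm]
      exact ha (T + 1) le_rfl
    · simp only [sum_range_succ, if_neg hT, add_zero]
      exact ih fun m hm => ha m (by omega)

lemma mul_card_le_sum_of_card_filter_le {g : ℕ → ℝ} {N : Set ℕ} [DecidablePred (· ∈ N)]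
    {μ₀ : ℝ} {w q m : ℕ} (hμ₀ : 0 ≤ μ₀) (hg : ∀ i ∈ Finset.Ioc w (w + m), 0 ≤ g i)
    (hgood : ∀ i ∈ Finset.Ioc w (w + m), i ∉ N → μ₀ ≤ g i)
    (hbad : (((Finset.Ioc w (w + m)).filter (· ∈ N)).card : ℝ) ≤ m * q / w) :
    μ₀ * (1 - q / w) * m ≤ ∑ i ∈ Finset.Ioc w (w + m), g i := by
  set s := Finset.Ioc w (w + m)
  have hcard : ((s.filter (· ∈ N)).card : ℝ) + (s.filter (· ∉ N)).card = m := by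
    rw [← Nat.cast_add, card_filter_add_card_filter_not, Nat.card_Ioc]
    simp
  have hbad_nonneg : 0 ≤ ∑ i ∈ s.filter (· ∈ N), g i :=
    sum_nonneg fun i hi => hg i (mem_filter.1 hi).1
  have hgood_ge : μ₀ * (s.filter (· ∉ N)).card ≤ ∑ i ∈ s.filter (· ∉ N), g i := by
    rw [mul_comm, ← nsmul_eq_mul]
    exact card_nsmul_le_sum _ _ _ fun i hi => hgood i (mem_filter.1 hi).1 (mem_filter.1 hi).2
  rw [← sum_filter_add_sum_filter_not s (· ∈ N)]
  have : μ₀ * (1 - q / w) * m = μ₀ * (m - m * q / w) := by ring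
  nlinarith

lemma sum_range_sub_add_le {f : ℕ → ℝ} (hf : ∀ t, 0 ≤ f t) (T w : ℕ) :
    ∑ t ∈ range T, (f t - f (w + t)) ≤ ∑ t ∈ range w, f t := by
  have h := (sum_range_add f T w).symm.trans ((add_comm T w).symm ▸ sum_range_add f w T)
  have : 0 ≤ ∑ t ∈ range w, f (T + t) := sum_nonneg fun t _ => hf _
  rw [sum_sub_distrib]
  linarith

/-- The left side is the sum stopped when `p` fails: it equals `z T - z 0` while `p` holds and
overshoots `b` by a single increment at the exit. -/
lemma sum_range_ite_sub_le_of_antitone {p : ℕ → Prop} [DecidablePred p] (hp : Antitone p)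
    {z : ℕ → ℝ} {b : ℝ} (hpz : ∀ t, p t → z t < b) (hz0 : z 0 ≤ b) {ε : ℝ} (hε : 0 < ε) (T : ℕ) :
    ∑ t ∈ range T, (if p t then z (t + 1) - z t else 0) ≤
      b - z 0 + (ε * ∑ t ∈ range T, (if p t then (z (t + 1) - z t) ^ 2 else 0) + ε⁻¹) / 2 := by
  set L := fun T => ∑ t ∈ range T, (if p t then z (t + 1) - z t else 0)
  set R := fun T => ∑ t ∈ range T, (if p t then (z (t + 1) - z t) ^ 2 else 0)
  have hR : ∀ T, 0 ≤ R T := fun T => sum_nonneg fun t _ => by positivity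
  suffices h : (p T → L T = z T - z 0) ∧ L T ≤ b - z 0 + (ε * R T + ε⁻¹) / 2 from h.2
  induction T with
  | zero =>
    simp only [L, R, range_zero, sum_empty, sub_self, mul_zero, zero_add, implies_true, true_and]
    linarith [inv_pos.2 hε]
  | succ T ih =>
    have hL : L (T + 1) = L T + if p T then z (T + 1) - z T else 0 := sum_range_succ _ _
    have hRs : R (T + 1) = R T + if p T then (z (T + 1) - z T) ^ 2 else 0 := sum_range_succ _ _
    by_cases hT : p T
    · simp only [hL, hRs, if_pos hT, ih.1 hT]
      refine ⟨fun _ => by ring, ?_⟩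
      have := abs_le_half_mul_sq_add_inv (z (T + 1) - z T) hε
      nlinarith [hpz T hT, le_abs_self (z (T + 1) - z T), hR T]
    · have hT1 : ¬p (T + 1) := fun h => hT (hp T.le_succ h)
      simp only [hL, hRs, if_neg hT, add_zero]
      exact ⟨fun h => absurd h hT1, ih.2⟩

lemma sum_Ioc_add_eq_sum_range (f : ℕ → ℝ) (w m : ℕ) :
    ∑ i ∈ Finset.Ioc w (w + m), f i = ∑ t ∈ range m, f (w + 1 + t) := by
  rw [← Finset.Ico_add_one_add_one_eq_Ioc, sum_Ico_eq_sum_range, add_right_comm,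
    Nat.add_sub_cancel_left]

lemma sInf_natCast_setOf_eq_tsum_indicator (p : ℕ → Prop) :
    sInf {t : ℝ≥0∞ | ∃ n : ℕ, t = n ∧ p n} = ∑' t : ℕ, {t | ∀ n ≤ t, ¬p n}.indicator 1 t := by
  classical
  rw [← _root_.tsum_subtype, Pi.one_def, ENNReal.tsum_set_one]
  by_cases h : ∃ n, p n
  · have hset : {t | ∀ n ≤ t, ¬p n} = {t | t < Nat.find h} := by
      ext t; simp [Nat.lt_find_iff]
    rw [hset, Nat.encard_range]
    refine le_antisymm (sInf_le ⟨_, rfl, Nat.find_spec h⟩) (le_sInf ?_)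
    rintro _ ⟨n, rfl, hn⟩
    simpa using Nat.find_min' h hn
  · push Not at h
    simp [h]

section
variable {Ω : Type*} {m0 : MeasurableSpace Ω} {P : Measure Ω}

lemma setIntegral_le_mul_measureReal_of_condExp_le [IsFiniteMeasure P] {m : MeasurableSpace Ω}
    (hm : m ≤ m0) {f : Ω → ℝ} (hf : Integrable f P) {c : ℝ} (hc : P[f|m] ≤ᵐ[P] fun _ => c)
    {s : Set Ω} (hs : MeasurableSet[m] s) : ∫ ω in s, f ω ∂P ≤ c * P.real s := by
  rw [← setIntegral_condExp hm hf hs, mul_comm, ← smul_eq_mul, ← setIntegral_const]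
  exact setIntegral_mono_ae integrable_condExp.integrableOn (integrableOn_const) hc

lemma mul_sum_measureReal_le_sum_setIntegral [IsFiniteMeasure P] {C : ℕ → Set Ω}
    (hC : Antitone C) (hCm : ∀ t, MeasurableSet (C t)) {g : ℕ → Ω → ℝ}
    (hg : ∀ t, Integrable (g t) P) {c : ℝ} {T : ℕ}
    (hpre : ∀ᵐ ω ∂P, ∀ m ≤ T, c * m ≤ ∑ t ∈ range m, g t ω) :
    c * ∑ t ∈ range T, P.real (C t) ≤ ∑ t ∈ range T, ∫ ω in C t, g t ω ∂P := by
  classical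
  have hL : c * ∑ t ∈ range T, P.real (C t) =
      ∫ ω, ∑ t ∈ range T, (C t).indicator (fun _ => c) ω ∂P := by
    rw [integral_finsetSum _ fun t _ => (integrable_const c).indicator (hCm t), mul_sum]
    simp [integral_indicator (hCm _), mul_comm]
  have hR : ∑ t ∈ range T, ∫ ω in C t, g t ω ∂P =
      ∫ ω, ∑ t ∈ range T, (C t).indicator (g t) ω ∂P := by
    rw [integral_finsetSum _ fun t _ => (hg t).indicator (hCm t)]
    simp [integral_indicator (hCm _)]
  rw [hL, hR]
  refine integral_mono_ae (integrable_finsetSum _ fun t _ => (integrable_const c).indicator (hCm t))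
    (integrable_finsetSum _ fun t _ => (hg t).indicator (hCm t)) ?_
  filter_upwards [hpre] with ω hω
  simp only [Set.indicator_apply]
  exact sum_range_ite_le_of_antitone (fun s t hst h => hC hst h) hω

lemma sum_setIntegral_le_sum_setIntegral_add_add_mul [IsProbabilityMeasure P]
    {𝒢 : Filtration ℕ m0} {C : ℕ → Set Ω} (hC : Antitone C) (hCm : ∀ t, MeasurableSet[𝒢 t] (C t))
    {f : ℕ → Ω → ℝ} (hf : ∀ t, Integrable (f t) P) {μ : ℝ} (hμ : 0 ≤ μ) (w : ℕ)
    (hbnd : ∀ t, P[f t | 𝒢 (w + t)] ≤ᵐ[P] fun _ => μ) (T : ℕ) :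
    ∑ t ∈ range T, ∫ ω in C t, f t ω ∂P ≤ ∑ t ∈ range T, ∫ ω in C (w + t), f t ω ∂P + w * μ := by
  have hterm : ∀ t, ∫ ω in C t, f t ω ∂P ≤
      ∫ ω in C (w + t), f t ω ∂P + μ * (P.real (C t) - P.real (C (w + t))) := by
    intro t
    have hsub : C (w + t) ⊆ C t := hC (by omega)
    have hm : MeasurableSet (C (w + t)) := 𝒢.le _ _ (hCm _)
    have h := setIntegral_le_mul_measureReal_of_condExp_le (𝒢.le _) (hf t) (hbnd t)
      ((𝒢.mono (by omega) _ (hCm t)).diff (hCm (w + t)))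
    rw [setIntegral_sdiff hm (hf t).integrableOn hsub, measureReal_sdiff hsub hm] at h
    linarith
  have hshift := sum_range_sub_add_le (f := fun t => P.real (C t)) (fun _ => measureReal_nonneg) T w
  have hw : ∑ t ∈ range w, P.real (C t) ≤ w := by
    simpa using sum_le_sum fun t (_ : t ∈ range w) => (measureReal_le_one : P.real (C t) ≤ 1)
  calc ∑ t ∈ range T, ∫ ω in C t, f t ω ∂P
      ≤ ∑ t ∈ range T, (∫ ω in C (w + t), f t ω ∂P + μ * (P.real (C t) - P.real (C (w + t)))) :=
        sum_le_sum fun t _ => hterm t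
    _ = ∑ t ∈ range T, ∫ ω in C (w + t), f t ω ∂P +
          μ * ∑ t ∈ range T, (P.real (C t) - P.real (C (w + t))) := by
        rw [sum_add_distrib, mul_sum]
    _ ≤ ∑ t ∈ range T, ∫ ω in C (w + t), f t ω ∂P + w * μ := by nlinarith

lemma sum_setIntegral_le_of_sum_range_lt [IsProbabilityMeasure P] {X : ℕ → Ω → ℝ}
    (hX : ∀ t, MemLp (X t) 2 P) {C : ℕ → Set Ω} (hC : Antitone C)
    (hCm : ∀ t, MeasurableSet (C t)) {b : ℝ} (hb : 0 ≤ b)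
    (hCX : ∀ t, ∀ ω ∈ C t, ∑ i ∈ range t, X i ω < b) {ε : ℝ} (hε : 0 < ε) (T : ℕ) :
    ∑ t ∈ range T, ∫ ω in C t, X t ω ∂P ≤
      b + (ε * ∑ t ∈ range T, ∫ ω in C t, X t ω ^ 2 ∂P + ε⁻¹) / 2 := by
  classical
  have hint : ∀ t, Integrable (X t) P := fun t => (hX t).integrable one_le_two
  have hint2 : ∀ t, Integrable (fun ω => X t ω ^ 2) P := fun t => (hX t).integrable_sq
  have hpt : ∀ ω, ∑ t ∈ range T, (C t).indicator (X t) ω ≤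
      b + (ε * ∑ t ∈ range T, (C t).indicator (fun ω => X t ω ^ 2) ω + ε⁻¹) / 2 := by
    intro ω
    have h := sum_range_ite_sub_le_of_antitone (p := (ω ∈ C ·)) (fun s t hst h => hC hst h)
      (z := fun t => ∑ i ∈ range t, X i ω) (hCX · ω) (by simpa using hb) hε T
    simpa [Set.indicator_apply, sum_range_succ] using h
  have hsum : ∀ f : ℕ → Ω → ℝ, (∀ t, Integrable (f t) P) →
      Integrable (fun ω => ∑ t ∈ range T, (C t).indicator (f t) ω) P := fun f hf =>
    integrable_finsetSum _ fun t _ => (hf t).indicator (hCm t)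
  have hsq := hsum (fun t ω => X t ω ^ 2) hint2
  have hsq' := hsq.const_mul ε
  have hR : ∫ ω, b + (ε * ∑ t ∈ range T, (C t).indicator (fun ω => X t ω ^ 2) ω + ε⁻¹) / 2 ∂P =
      b + (ε * ∑ t ∈ range T, ∫ ω in C t, X t ω ^ 2 ∂P + ε⁻¹) / 2 := by
    rw [integral_add (integrable_const _) (by fun_prop), integral_div,
      integral_add hsq' (integrable_const _), integral_const_mul,
      integral_finsetSum _ fun t _ => (hint2 t).indicator (hCm t)]
    simp [integral_indicator (hCm _)]
  rw [← hR]
  refine (le_of_eq ?_).trans (integral_mono (hsum X hint)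
    ((integrable_const b).add ((hsq'.add (integrable_const ε⁻¹)).div_const 2)) hpt)
  rw [integral_finsetSum _ fun t _ => (hint t).indicator (hCm t)]
  simp [integral_indicator (hCm _)]

/-- The event `{τ_b > t}`. -/
def notHitBy (S : ℕ → Ω → ℝ) (w : ℕ) (b : ℝ) (t : ℕ) : Set Ω :=
  {ω | ∀ n ≤ t, w < n → S n ω < b}

variable {𝒢 : Filtration ℕ m0} {Y S : ℕ → Ω → ℝ} {w : ℕ} {b : ℝ}

lemma antitone_notHitBy : Antitone (notHitBy S w b) :=
  fun _ _ hst _ hω n hn => hω n (hn.trans hst)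

lemma measurableSet_notHitBy (hadp : ∀ n, 1 ≤ n → StronglyMeasurable[𝒢 n] (Y n))
    (hS : ∀ n ω, S n ω = ∑ i ∈ Finset.Ioc w n, Y i ω) (t : ℕ) :
    MeasurableSet[𝒢 t] (notHitBy S w b t) := by
  have hSm : ∀ n ≤ t, StronglyMeasurable[𝒢 t] (S n) := by
    intro n hn
    rw [show S n = ∑ i ∈ Finset.Ioc w n, Y i from funext fun ω => by simp [hS]]
    refine Finset.stronglyMeasurable_sum _ fun i hi => ?_
    rw [Finset.mem_Ioc] at hi
    exact (hadp i (by omega)).mono (𝒢.mono (by omega))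
  simp only [notHitBy, ofPred_forall]
  exact .iInter fun n => .iInter fun hn => .iInter fun _ =>
    measurableSet_lt (hSm n hn).measurable measurable_const

lemma sum_range_lt_of_mem_notHitBy (hS : ∀ n ω, S n ω = ∑ i ∈ Finset.Ioc w n, Y i ω) (hb : 0 < b)
    {t : ℕ} {ω : Ω} (hω : ω ∈ notHitBy S w b (w + t)) :
    ∑ i ∈ range t, Y (w + 1 + i) ω < b := by
  rcases t.eq_zero_or_pos with rfl | ht
  · simpa using hb
  · rw [← sum_Ioc_add_eq_sum_range (Y · ω), ← hS]
    exact hω _ le_rfl (by omega)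

lemma mul_sum_measureReal_notHitBy_le [IsFiniteMeasure P]
    (hY : ∀ n, 1 ≤ n → Integrable (Y n) P) (hadp : ∀ n, 1 ≤ n → StronglyMeasurable[𝒢 n] (Y n))
    (hS : ∀ n ω, S n ω = ∑ i ∈ Finset.Ioc w n, Y i ω) {N : Set ℕ} {q : ℕ} {μstar μlow : ℝ}
    (hμstar : 0 ≤ μstar) (hμlow : 0 ≤ μlow)
    (haOut : ∀ n, w < n → n ∉ N → (fun _ => μstar) ≤ᵐ[P] P[Y n | 𝒢 (n - w - 1)])
    (haIn : ∀ n, w < n → n ∈ N → (fun _ => μlow) ≤ᵐ[P] P[Y n | 𝒢 (n - w - 1)])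
    (hd : ∀ (n : ℕ) (s : Finset ℕ),
      (∀ m ∈ s, m ∈ N ∧ m ∈ Finset.Ioc w (w + n)) → (s.card : ℝ) ≤ n * q / w)
    (T : ℕ) :
    μstar * (1 - q / w) * ∑ t ∈ range T, P.real (notHitBy S w b t) ≤
      ∑ t ∈ range T, ∫ ω in notHitBy S w b t, Y (w + 1 + t) ω ∂P := by
  classical
  have hg : ∀ᵐ ω ∂P, ∀ i, w < i →
      0 ≤ P[Y i | 𝒢 (i - w - 1)] ω ∧ (i ∉ N → μstar ≤ P[Y i | 𝒢 (i - w - 1)] ω) := by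
    refine ae_all_iff.2 fun i => ?_
    by_cases hi : w < i
    · by_cases hN : i ∈ N
      · filter_upwards [haIn i hi hN] with ω hω _ using ⟨hμlow.trans hω, absurd hN⟩
      · filter_upwards [haOut i hi hN] with ω hω _ using ⟨hμstar.trans hω, fun _ => hω⟩
    · exact .of_forall fun _ h => absurd h hi
  have hidx : ∀ t, w + 1 + t - w - 1 = t := by omega
  have hCm : ∀ t, MeasurableSet[𝒢 t] (notHitBy S w b t) := measurableSet_notHitBy hadp hS
  refine (mul_sum_measureReal_le_sum_setIntegral antitone_notHitBy (fun t => 𝒢.le t _ (hCm t))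
    (fun _ => integrable_condExp) ?_).trans_eq
    (sum_congr rfl fun t _ => setIntegral_condExp (𝒢.le t) (hY _ (by omega)) (hCm t))
  filter_upwards [hg] with ω hω m _
  have h := mul_card_le_sum_of_card_filter_le (g := fun i => P[Y i | 𝒢 (i - w - 1)] ω) hμstar
    (fun i hi => (hω i (Finset.mem_Ioc.1 hi).1).1) (fun i hi => (hω i (Finset.mem_Ioc.1 hi).1).2)
    (hd m _ fun i hi => by simpa [and_comm] using hi)
  simpa only [sum_Ioc_add_eq_sum_range, hidx] using h

lemma sum_setIntegral_notHitBy_le [IsProbabilityMeasure P]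
    (hY2 : ∀ n, 1 ≤ n → MemLp (Y n) 2 P) (hadp : ∀ n, 1 ≤ n → StronglyMeasurable[𝒢 n] (Y n))
    (hS : ∀ n ω, S n ω = ∑ i ∈ Finset.Ioc w n, Y i ω) {μ v : ℝ} (hμ : 0 ≤ μ) (hv : 0 ≤ v)
    (hbnd : ∀ n, w < n → P[Y n | 𝒢 (n - 1)] ≤ᵐ[P] (fun _ => μ))
    (hvar : ∀ n, w < n → P[(fun ω => (Y n ω) ^ 2) | 𝒢 (n - 1)] ≤ᵐ[P] (fun _ => v))
    (hb : 0 < b) {ε : ℝ} (hε : 0 < ε) (T : ℕ) :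
    ∑ t ∈ range T, ∫ ω in notHitBy S w b t, Y (w + 1 + t) ω ∂P ≤
      b + w * μ + (ε * (v * ∑ t ∈ range T, P.real (notHitBy S w b t)) + ε⁻¹) / 2 := by
  have hCm : ∀ t, MeasurableSet[𝒢 t] (notHitBy S w b t) := measurableSet_notHitBy hadp hS
  have hidx : ∀ t, w + 1 + t - 1 = w + t := by omega
  have hshift := sum_setIntegral_le_sum_setIntegral_add_add_mul (f := fun t => Y (w + 1 + t))
    antitone_notHitBy hCm (fun t => (hY2 _ (by omega)).integrable one_le_two) hμ w
    (fun t => by simpa only [hidx] using hbnd (w + 1 + t) (by omega)) T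
  have hover := sum_setIntegral_le_of_sum_range_lt (X := fun t => Y (w + 1 + t))
    (fun t => hY2 _ (by omega)) (fun _ _ hst => antitone_notHitBy (Nat.add_le_add_left hst w))
    (fun t => 𝒢.le _ _ (hCm _))
    hb.le (fun t ω hω => sum_range_lt_of_mem_notHitBy hS hb hω) hε T
  have hsq : ∑ t ∈ range T, ∫ ω in notHitBy S w b (w + t), Y (w + 1 + t) ω ^ 2 ∂P ≤
      v * ∑ t ∈ range T, P.real (notHitBy S w b t) := by
    rw [mul_sum]
    refine sum_le_sum fun t _ => ?_
    calc ∫ ω in notHitBy S w b (w + t), Y (w + 1 + t) ω ^ 2 ∂P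
        ≤ v * P.real (notHitBy S w b (w + t)) :=
          setIntegral_le_mul_measureReal_of_condExp_le (𝒢.le _) (hY2 _ (by omega)).integrable_sq
            (by simpa only [hidx] using hvar (w + 1 + t) (by omega)) (hCm _)
      _ ≤ v * P.real (notHitBy S w b t) :=
          mul_le_mul_of_nonneg_left (measureReal_mono (antitone_notHitBy (by omega))) hv
  nlinarith [mul_le_mul_of_nonneg_left hsq hε.le]

end

theorem expected_hitting_time_explicit_bound_general
    {Ω : Type*} [m0 : MeasurableSpace Ω] (P : Measure Ω) [IsProbabilityMeasure P]
    (𝒢 : Filtration ℕ m0)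
    (Y : ℕ → Ω → ℝ)
    (hY2 : ∀ n, 1 ≤ n → MemLp (Y n) 2 P)
    (hadp : ∀ n, 1 ≤ n → StronglyMeasurable[𝒢 n] (Y n))
    (w q : ℕ) (hqw : q < w)
    (N : Set ℕ)
    (μstar μlow μ v : ℝ)
    (hμstar : 0 < μstar) (hμlow : 0 < μlow) (hμ : 0 < μ) (hv : 0 < v)
    (haOut : ∀ n, w < n → n ∉ N →
      (fun _ => μstar) ≤ᵐ[P] P[Y n | 𝒢 (n - w - 1)])
    (haIn : ∀ n, w < n → n ∈ N →
      (fun _ => μlow) ≤ᵐ[P] P[Y n | 𝒢 (n - w - 1)])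
    (hbnd : ∀ n, w < n → P[Y n | 𝒢 (n - 1)] ≤ᵐ[P] (fun _ => μ))
    (hvar : ∀ n, w < n → P[(fun ω => (Y n ω) ^ 2) | 𝒢 (n - 1)] ≤ᵐ[P] (fun _ => v))
    (hd : ∀ (n : ℕ) (s : Finset ℕ),
      (∀ m ∈ s, m ∈ N ∧ m ∈ Finset.Ioc w (w + n)) → (s.card : ℝ) ≤ n * q / w)
    (S : ℕ → Ω → ℝ) (hS : ∀ n ω, S n ω = ∑ i ∈ Finset.Ioc w n, Y i ω)
    (b : ℝ) (hb : 0 < b)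
    (τ : Ω → ℝ≥0∞)
    (hτ : ∀ ω, τ ω = sInf {t : ℝ≥0∞ | ∃ n : ℕ, t = n ∧ w < n ∧ b ≤ S n ω})
    (K : ℝ) (hK : K = v / (μstar * (1 - (q : ℝ) / w))) :
    ∫⁻ ω, τ ω ∂P ≤
      ENNReal.ofReal
        ((b + w * μ + (K + Real.sqrt (K * b) + Real.sqrt (K * (w * μ)))) /
          (μstar * (1 - (q : ℝ) / w))) := by
  have hc : 0 < μstar * (1 - (q : ℝ) / w) := by
    have hw : (0 : ℝ) < w := by exact_mod_cast (by omega : 0 < w)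
    exact mul_pos hμstar (sub_pos.2 ((div_lt_one hw).2 (by exact_mod_cast hqw)))
  have hCm : ∀ t, MeasurableSet (notHitBy S w b t) := fun t =>
    𝒢.le t _ (measurableSet_notHitBy hadp hS t)
  have hτC : ∀ ω, τ ω = ∑' t, (notHitBy S w b t).indicator 1 ω := by
    intro ω
    rw [hτ, sInf_natCast_setOf_eq_tsum_indicator (fun n => w < n ∧ b ≤ S n ω)]
    simp only [Set.indicator_apply, mem_ofPred_eq, notHitBy, not_and, not_le, Pi.one_apply]
  rw [lintegral_congr hτC, lintegral_tsum fun t => (measurable_one.indicator (hCm t)).aemeasurable]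
  simp_rw [lintegral_indicator_one (hCm _)]
  refine ENNReal.tsum_le_of_sum_range_le fun T => ?_
  rw [← sum_congr rfl fun t _ => ofReal_measureReal,
    ← ENNReal.ofReal_sum_of_nonneg fun _ _ => measureReal_nonneg]
  refine ENNReal.ofReal_le_ofReal ?_
  set x := ∑ t ∈ range T, P.real (notHitBy S w b t)
  have hbound : μstar * (1 - (q : ℝ) / w) * x ≤ b + w * μ + √(v * x) :=
    le_add_sqrt_of_forall_le_add_half (by positivity) fun ε hε =>
      (mul_sum_measureReal_notHitBy_le (fun n hn => (hY2 n hn).integrable one_le_two) hadp hS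
        hμstar.le hμlow.le haOut haIn hd T).trans
      (sum_setIntegral_notHitBy_le hY2 hadp hS hμ.le hv.le hbnd hvar hb hε T)
  rw [hK, le_div_iff₀ hc, mul_comm]
  exact mul_le_of_mul_le_add_add_sqrt hc hv.le hb.le (by positivity) (by positivity) hbound

/-- Proposition 1(ii): with `K = v / (μ* (1 - q/w))`, the expected hitting time satisfies
`E[τ_b] ≤ (b + wμ + K + √(Kb) + √(Kwμ)) / (μ* (1 - q/w))`. -/
theorem expected_hitting_time_explicit_bound
    {Ω : Type*} [m0 : MeasurableSpace Ω] (P : Measure Ω) [IsProbabilityMeasure P]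
    (𝒢 : Filtration ℕ m0) (h𝒢0 : 𝒢 0 = ⊥)
    (Y : ℕ → Ω → ℝ)
    (hY2 : ∀ n, 1 ≤ n → MemLp (Y n) 2 P)
    (hadp : ∀ n, 1 ≤ n → StronglyMeasurable[𝒢 n] (Y n))
    (w q : ℕ) (hq : 0 < q) (hqw : q < w)
    (N : Set ℕ) (hN : ∀ m ∈ N, w < m)
    (μstar μlow μ v : ℝ)
    (hμstar : 0 < μstar) (hμlow : 0 < μlow) (hμ : 0 < μ) (hv : 0 < v)
    (haOut : ∀ n, w < n → n ∉ N →
      (fun _ => μstar) ≤ᵐ[P] P[Y n | 𝒢 (n - w - 1)])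
    (haIn : ∀ n, w < n → n ∈ N →
      (fun _ => μlow) ≤ᵐ[P] P[Y n | 𝒢 (n - w - 1)])
    (hbnd : ∀ n, w < n → P[Y n | 𝒢 (n - 1)] ≤ᵐ[P] (fun _ => μ))
    (hvar : ∀ n, w < n → P[(fun ω => (Y n ω) ^ 2) | 𝒢 (n - 1)] ≤ᵐ[P] (fun _ => v))
    (hd : ∀ (n : ℕ) (s : Finset ℕ),
      (∀ m ∈ s, m ∈ N ∧ m ∈ Finset.Ioc w (w + n)) → (s.card : ℝ) ≤ n * q / w)
    (S : ℕ → Ω → ℝ) (hS : ∀ n ω, S n ω = ∑ i ∈ Finset.Ioc w n, Y i ω)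
    (b : ℝ) (hb : 0 < b)
    (τ : Ω → ℝ≥0∞)
    (hτ : ∀ ω, τ ω = sInf {t : ℝ≥0∞ | ∃ n : ℕ, t = n ∧ w < n ∧ b ≤ S n ω})
    (K : ℝ) (hK : K = v / (μstar * (1 - (q : ℝ) / w))) :
    ∫⁻ ω, τ ω ∂P ≤
      ENNReal.ofReal
        ((b + w * μ + (K + Real.sqrt (K * b) + Real.sqrt (K * (w * μ)))) /
          (μstar * (1 - (q : ℝ) / w))) :=
  expected_hitting_time_explicit_bound_general (m0 := m0) P 𝒢 Y hY2 hadp w q hqw N μstar μlow μ v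
    hμstar hμlow hμ hv haOut haIn hbnd hvar hd S hS b hb τ hτ K hK
end

section
/- Under the stated assumptions, for every b > 0 the expected overshoot R_b = S_{τ_b} − b satisfies E[R_b] ≤ K + √(Kb) + √(Kwμ), where K = v/(μ^*(1 − q/w)). -/
/-!
Write `R_b = S_τ - b`. The event `{n - w ≤ τ}` is known at time `n - w - 1` and the window
`{n - w ≤ τ < n}` at time `n - 1`, so for `n ∉ N`
`E[Y_n; n ≤ τ] ≥ μ* P(n - w ≤ τ) - μ P(n - w ≤ τ < n)`, and for `n ∈ N` the first term drops.
Every `ω` lies in at most `w` windows and the density condition lets `N` take at most a fraction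
`q/w` of the indices, so summing over `w < n ≤ m` and using `S_{τ ∧ m} ≤ S_τ` gives
`μ* (1 - q/w) ∑_{w < n ≤ m} P(n ≤ τ) ≤ b + E[R_b] + μ w`. The overshoot is at most the last
increment `Y_τ`, so Cauchy–Schwarz and the conditional second-moment bound give
`E[R_b]² ≤ v ∑_{n > w} P(n ≤ τ) ≤ K (b + E[R_b] + w μ)`; solving this quadratic inequality gives
the claim.
-/

open MeasureTheory Filter Set

lemma card_filter_mem_eq_sum_indicator {α ι : Type*} (s : Finset ι) (A : ι → Set α)
    [∀ i, DecidablePred (· ∈ A i)] (a : α) :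
    ((s.filter (a ∈ A ·)).card : ℝ) = ∑ i ∈ s, (A i).indicator 1 a := by
  simp [Set.indicator_apply, Finset.sum_boole]

section General

variable {Ω : Type*} [m0 : MeasurableSpace Ω] {μ : Measure Ω}

lemma le_add_sqrt_add_sqrt_of_sq_le {r K b x : ℝ} (hK : 0 ≤ K) (hb : 0 ≤ b)
    (hx : 0 ≤ x) (h : r ^ 2 ≤ K * (b + r + x)) : r ≤ K + √(K * b) + √(K * x) := by
  have hsb := Real.sq_sqrt (mul_nonneg hK hb)
  have hsx := Real.sq_sqrt (mul_nonneg hK hx)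
  nlinarith [Real.sqrt_nonneg (K * b), Real.sqrt_nonneg (K * x),
    mul_nonneg (Real.sqrt_nonneg (K * b)) (Real.sqrt_nonneg (K * x)),
    sq_nonneg (r - K - √(K * b) - √(K * x))]

lemma integral_le_sqrt_integral_sq [IsProbabilityMeasure μ] {f : Ω → ℝ} (hf : MemLp f 2 μ) :
    ∫ ω, f ω ∂μ ≤ √(∫ ω, f ω ^ 2 ∂μ) := by
  have h := ProbabilityTheory.variance_nonneg f μ
  rw [ProbabilityTheory.variance_eq_sub hf] at h
  exact (le_abs_self _).trans (Real.abs_le_sqrt (by simpa using h))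

lemma mul_le_setIntegral_of_le_condExp [IsFiniteMeasure μ] {m : MeasurableSpace Ω}
    (hm : m ≤ m0) {f : Ω → ℝ} (hf : Integrable f μ) {s : Set Ω}
    (hs : MeasurableSet[m] s) {c : ℝ} (hc : (fun _ => c) ≤ᵐ[μ] μ[f|m]) :
    μ.real s * c ≤ ∫ ω in s, f ω ∂μ := by
  rw [← setIntegral_condExp hm hf hs, ← smul_eq_mul, ← setIntegral_const]
  exact setIntegral_mono_ae integrableOn_const integrable_condExp.integrableOn hc

lemma setIntegral_le_mul_of_condExp_le [IsFiniteMeasure μ] {m : MeasurableSpace Ω}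
    (hm : m ≤ m0) {f : Ω → ℝ} (hf : Integrable f μ) {s : Set Ω}
    (hs : MeasurableSet[m] s) {c : ℝ} (hc : μ[f|m] ≤ᵐ[μ] fun _ => c) :
    ∫ ω in s, f ω ∂μ ≤ μ.real s * c := by
  rw [← setIntegral_condExp hm hf hs, ← smul_eq_mul, ← setIntegral_const]
  exact setIntegral_mono_ae integrable_condExp.integrableOn integrableOn_const hc

lemma integrable_card_filter_mem [IsFiniteMeasure μ] {ι : Type*} (s : Finset ι)
    {A : ι → Set Ω} [∀ i, DecidablePred (· ∈ A i)] (hA : ∀ i, MeasurableSet (A i)) :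
    Integrable (fun ω => ((s.filter (ω ∈ A ·)).card : ℝ)) μ := by
  simp_rw [card_filter_mem_eq_sum_indicator]
  exact integrable_finsetSum _ fun i _ => (integrable_const 1).indicator (hA i)

lemma sum_measureReal_eq_integral_card [IsFiniteMeasure μ] {ι : Type*} (s : Finset ι)
    {A : ι → Set Ω} [∀ i, DecidablePred (· ∈ A i)] (hA : ∀ i, MeasurableSet (A i)) :
    ∑ i ∈ s, μ.real (A i) = ∫ ω, ((s.filter (ω ∈ A ·)).card : ℝ) ∂μ := by
  simp_rw [card_filter_mem_eq_sum_indicator]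
  rw [integral_finsetSum _ fun i _ => (integrable_const 1).indicator (hA i)]
  simp_rw [integral_indicator_one (hA _)]

end General

def IsFirstPassage {Ω : Type*} (S : ℕ → Ω → ℝ) (w : ℕ) (b : ℝ) (n : ℕ) (ω : Ω) : Prop :=
  w < n ∧ b ≤ S n ω ∧ ∀ k, w < k → k < n → S k ω < b

def notReachedBy {Ω : Type*} (S : ℕ → Ω → ℝ) (w : ℕ) (b : ℝ) (j : ℕ) : Set Ω :=
  {ω | ∀ k ∈ Finset.Ioc w j, S k ω < b}

section FirstPassage

variable {Ω : Type*} {Y S : ℕ → Ω → ℝ} {w : ℕ} {b : ℝ}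

lemma IsFirstPassage.le_iff_mem_notReachedBy {n : ℕ} {ω : Ω} (h : IsFirstPassage S w b n ω)
    (k : ℕ) : k ≤ n ↔ ω ∈ notReachedBy S w b (k - 1) := by
  refine ⟨fun hk j hj => h.2.2 j (Finset.mem_Ioc.1 hj).1 (by grind), fun hk => ?_⟩
  by_contra! hlt
  exact h.2.1.not_gt (hk n (Finset.mem_Ioc.2 ⟨h.1, by omega⟩))

lemma IsFirstPassage.sub_le (hS : ∀ n ω, S n ω = ∑ i ∈ Finset.Ioc w n, Y i ω) (hb : 0 < b)
    {n : ℕ} {ω : Ω} (h : IsFirstPassage S w b n ω) : S n ω - b ≤ Y n ω := by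
  obtain ⟨k, rfl⟩ : ∃ k, n = k + 1 := ⟨n - 1, by have := h.1; omega⟩
  have hk : S k ω < b := by
    rcases (show w < k ∨ k = w by have := h.1; omega) with hk | rfl
    · exact h.2.2 k hk (by omega)
    · simpa [hS] using hb
  have : S (k + 1) ω = S k ω + Y (k + 1) ω := by
    rw [hS, hS, Finset.sum_Ioc_succ_top (by have := h.1; omega)]
  linarith

lemma sum_indicator_eq_ite (τ : Ω → ℕ) (f : ℕ → Ω → ℝ) (s : Finset ℕ) (ω : Ω) :
    ∑ n ∈ s, {ω | τ ω = n}.indicator (f n) ω = if τ ω ∈ s then f (τ ω) ω else 0 := by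
  simp [Set.indicator_apply]

variable [m0 : MeasurableSpace Ω] {P : Measure Ω} {𝒢 : Filtration ℕ m0} {τ : Ω → ℕ}

lemma adapted_of_eq_sum_Ioc (hY : ∀ n, w < n → StronglyMeasurable[𝒢 n] (Y n))
    (hS : ∀ n ω, S n ω = ∑ i ∈ Finset.Ioc w n, Y i ω) : Adapted 𝒢 S := fun n => by
  rw [funext (hS n)]
  exact Finset.measurable_sum _ fun i hi =>
    ((hY i (Finset.mem_Ioc.1 hi).1).mono (𝒢.mono (Finset.mem_Ioc.1 hi).2)).measurable

lemma measurableSet_notReachedBy (hS : Adapted 𝒢 S) (j : ℕ) :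
    MeasurableSet[𝒢 j] (notReachedBy S w b j) := by
  have : notReachedBy S w b j = ⋂ k ∈ Finset.Ioc w j, {ω | S k ω < b} := by
    ext; simp [notReachedBy]
  rw [this]
  exact .biInter (Finset.countable_toSet _) fun k hk => measurableSet_lt
    ((hS k).mono (𝒢.mono (Finset.mem_Ioc.1 hk).2) le_rfl) measurable_const

lemma ae_eq_notReachedBy (hτ : ∀ᵐ ω ∂P, IsFirstPassage S w b (τ ω) ω) (k : ℕ) :
    {ω | k ≤ τ ω} =ᵐ[P] notReachedBy S w b (k - 1) := by
  filter_upwards [hτ] with ω hω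
  exact propext (hω.le_iff_mem_notReachedBy k)

lemma sum_setIntegral_le_integral_firstPassage [IsProbabilityMeasure P]
    (hS : ∀ n ω, S n ω = ∑ i ∈ Finset.Ioc w n, Y i ω) (hY : ∀ n, w < n → Integrable (Y n) P)
    (hτm : Measurable τ) (hτ : ∀ᵐ ω ∂P, IsFirstPassage S w b (τ ω) ω)
    (hint : Integrable (fun ω => S (τ ω) ω - b) P) {m : ℕ} (hm : w < m) :
    ∑ n ∈ Finset.Ioc w m, ∫ ω in {ω | n ≤ τ ω}, Y n ω ∂P ≤ b + ∫ ω, (S (τ ω) ω - b) ∂P := by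
  have hSτ : Integrable (fun ω => S (τ ω) ω) P :=
    (hint.add (integrable_const b)).congr (ae_of_all _ fun ω => sub_add_cancel _ _)
  have hstopped : ∀ ω, S (min (τ ω) m) ω
      = ∑ n ∈ Finset.Ioc w m, {ω | n ≤ τ ω}.indicator (Y n) ω := by
    intro ω
    have : Finset.Ioc w (min (τ ω) m) = (Finset.Ioc w m).filter (· ≤ τ ω) := by
      ext n; simp only [Finset.mem_Ioc, Finset.mem_filter]; omega
    rw [hS, this, Finset.sum_filter]
    exact Finset.sum_congr rfl fun n _ => by rw [Set.indicator_apply]; rfl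
  have hIci : ∀ n, MeasurableSet {ω | n ≤ τ ω} := fun n => hτm measurableSet_Ici
  have hind : ∀ n ∈ Finset.Ioc w m, Integrable ({ω | n ≤ τ ω}.indicator (Y n)) P :=
    fun n hn => (hY n (Finset.mem_Ioc.1 hn).1).indicator (hIci n)
  calc ∑ n ∈ Finset.Ioc w m, ∫ ω in {ω | n ≤ τ ω}, Y n ω ∂P
      = ∫ ω, S (min (τ ω) m) ω ∂P := by
        simp_rw [hstopped, integral_finsetSum _ hind, integral_indicator (hIci _)]
    _ ≤ ∫ ω, S (τ ω) ω ∂P := by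
        refine integral_mono_ae ((integrable_finsetSum _ hind).congr
          (ae_of_all _ fun ω => (hstopped ω).symm)) hSτ ?_
        filter_upwards [hτ] with ω hω
        rcases le_or_gt (τ ω) m with h | h
        · rw [min_eq_left h]
        · rw [min_eq_right h.le]
          exact (hω.2.2 m hm h).le.trans hω.2.1
    _ = b + ∫ ω, (S (τ ω) ω - b) ∂P := by
        rw [integral_sub hSτ (integrable_const b)]; simp

lemma mul_sub_mul_le_setIntegral [IsFiniteMeasure P] (hSa : Adapted 𝒢 S) (hτm : Measurable τ)
    (hτ : ∀ᵐ ω ∂P, IsFirstPassage S w b (τ ω) ω) {n : ℕ} (hY : Integrable (Y n) P) {a μ : ℝ}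
    (ha : (fun _ => a) ≤ᵐ[P] P[Y n | 𝒢 (n - w - 1)])
    (hμ : P[Y n | 𝒢 (n - 1)] ≤ᵐ[P] fun _ => μ) :
    P.real {ω | n - w ≤ τ ω} * a - P.real ({ω | n - w ≤ τ ω} \ {ω | n ≤ τ ω}) * μ
      ≤ ∫ ω in {ω | n ≤ τ ω}, Y n ω ∂P := by
  have hlow : P.real {ω | n - w ≤ τ ω} * a ≤ ∫ ω in {ω | n - w ≤ τ ω}, Y n ω ∂P := by
    rw [setIntegral_congr_set (ae_eq_notReachedBy hτ _),
      measureReal_congr (ae_eq_notReachedBy hτ _)]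
    exact mul_le_setIntegral_of_le_condExp (𝒢.le _) hY (measurableSet_notReachedBy hSa _) ha
  have hup : ∫ ω in {ω | n - w ≤ τ ω} \ {ω | n ≤ τ ω}, Y n ω ∂P
      ≤ P.real ({ω | n - w ≤ τ ω} \ {ω | n ≤ τ ω}) * μ := by
    have h := (ae_eq_notReachedBy hτ (n - w)).diff (ae_eq_notReachedBy hτ n)
    rw [setIntegral_congr_set h, measureReal_congr h]
    exact setIntegral_le_mul_of_condExp_le (𝒢.le _) hY
      ((𝒢.mono (by omega) _ (measurableSet_notReachedBy hSa _)).diff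
        (measurableSet_notReachedBy hSa _)) hμ
  have hsplit : ∫ ω in {ω | n - w ≤ τ ω} \ {ω | n ≤ τ ω}, Y n ω ∂P
      = ∫ ω in {ω | n - w ≤ τ ω}, Y n ω ∂P - ∫ ω in {ω | n ≤ τ ω}, Y n ω ∂P :=
    setIntegral_sdiff (hτm measurableSet_Ici) hY.integrableOn
      fun ω (h : n ≤ τ ω) => (Nat.sub_le n w).trans h
  linarith

lemma sum_measureReal_window_le [IsProbabilityMeasure P] (hτm : Measurable τ) (m : ℕ) :
    ∑ n ∈ Finset.Ioc w m, P.real ({ω | n - w ≤ τ ω} \ {ω | n ≤ τ ω}) ≤ w := by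
  have hA : ∀ n, MeasurableSet ({ω | n - w ≤ τ ω} \ {ω | n ≤ τ ω}) :=
    fun n => (hτm measurableSet_Ici).diff (hτm measurableSet_Ici)
  rw [sum_measureReal_eq_integral_card _ hA]
  refine (integral_mono (integrable_card_filter_mem _ hA) (integrable_const (w : ℝ))
    fun ω => ?_).trans_eq (by simp)
  refine Nat.cast_le.2 ((Finset.card_le_card fun n hn => ?_).trans
    (by simp : (Finset.Ioc (τ ω) (τ ω + w)).card ≤ w))
  simp only [Finset.mem_filter, Finset.mem_Ioc, Set.mem_sdiff, Set.mem_ofPred_eq] at hn ⊢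
  omega

lemma sum_measureReal_mem_le [IsFiniteMeasure P] (hτm : Measurable τ) {N : Set ℕ}
    [DecidablePred (· ∈ N)] {ρ : ℝ}
    (hd : ∀ (n : ℕ) (s : Finset ℕ),
      (∀ m ∈ s, m ∈ N ∧ m ∈ Finset.Ioc w (w + n)) → (s.card : ℝ) ≤ n * ρ) (m : ℕ) :
    ∑ n ∈ (Finset.Ioc w m).filter (· ∈ N), P.real {ω | n - w ≤ τ ω}
      ≤ ρ * ∑ n ∈ Finset.Ioc w m, P.real {ω | n - w ≤ τ ω} := by
  have hA : ∀ n, MeasurableSet {ω | n - w ≤ τ ω} := fun n => hτm measurableSet_Ici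
  rw [sum_measureReal_eq_integral_card _ hA, sum_measureReal_eq_integral_card _ hA,
    ← integral_const_mul]
  refine integral_mono (integrable_card_filter_mem _ hA)
    ((integrable_card_filter_mem _ hA).const_mul ρ) fun ω => ?_
  have hwindow : (Finset.Ioc w m).filter (fun n => ω ∈ {ω | n - w ≤ τ ω})
      = Finset.Ioc w (w + min (τ ω) (m - w)) := by
    ext n; simp only [Finset.mem_filter, Finset.mem_Ioc, Set.mem_ofPred_eq]; omega
  simp only [hwindow, Nat.card_Ioc, add_tsub_cancel_left]
  rw [mul_comm]
  refine hd _ _ fun n hn => ?_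
  simp only [Finset.mem_filter, Finset.mem_Ioc, Set.mem_ofPred_eq] at hn ⊢
  exact ⟨hn.1.2, hn.1.1.1, by omega⟩

lemma mul_sum_measureReal_le_integral_add [IsProbabilityMeasure P]
    (hS : ∀ n ω, S n ω = ∑ i ∈ Finset.Ioc w n, Y i ω) (hSa : Adapted 𝒢 S)
    (hY : ∀ n, w < n → Integrable (Y n) P) (hτm : Measurable τ)
    (hτ : ∀ᵐ ω ∂P, IsFirstPassage S w b (τ ω) ω)
    (hint : Integrable (fun ω => S (τ ω) ω - b) P) {N : Set ℕ} {μstar μlow μ ρ : ℝ}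
    (hμstar : 0 ≤ μstar) (hμlow : 0 ≤ μlow) (hμ : 0 ≤ μ) (hρ : ρ ≤ 1)
    (haOut : ∀ n, w < n → n ∉ N → (fun _ => μstar) ≤ᵐ[P] P[Y n | 𝒢 (n - w - 1)])
    (haIn : ∀ n, w < n → n ∈ N → (fun _ => μlow) ≤ᵐ[P] P[Y n | 𝒢 (n - w - 1)])
    (hbnd : ∀ n, w < n → P[Y n | 𝒢 (n - 1)] ≤ᵐ[P] fun _ => μ)
    (hd : ∀ (n : ℕ) (s : Finset ℕ),
      (∀ m ∈ s, m ∈ N ∧ m ∈ Finset.Ioc w (w + n)) → (s.card : ℝ) ≤ n * ρ)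
    {m : ℕ} (hm : w < m) :
    μstar * (1 - ρ) * ∑ n ∈ Finset.Ioc w m, P.real {ω | n ≤ τ ω}
      ≤ b + ∫ ω, (S (τ ω) ω - b) ∂P + μ * w := by
  classical
  set A : ℕ → ℝ := fun n => P.real {ω | n - w ≤ τ ω}
  set a : ℕ → ℝ := fun n => if n ∈ N then 0 else μstar
  have hstep : ∀ n ∈ Finset.Ioc w m,
      A n * a n - P.real ({ω | n - w ≤ τ ω} \ {ω | n ≤ τ ω}) * μ
        ≤ ∫ ω in {ω | n ≤ τ ω}, Y n ω ∂P := by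
    intro n hn
    replace hn := (Finset.mem_Ioc.1 hn).1
    refine mul_sub_mul_le_setIntegral hSa hτm hτ (hY n hn) ?_ (hbnd n hn)
    by_cases hN : n ∈ N
    · filter_upwards [haIn n hn hN] with ω h
      simp only [a, hN, if_true]
      exact hμlow.trans h
    · simpa [a, hN] using haOut n hn hN
  have hsum_a : ∑ n ∈ Finset.Ioc w m, A n * a n = μstar * (∑ n ∈ Finset.Ioc w m, A n
      - ∑ n ∈ (Finset.Ioc w m).filter (· ∈ N), A n) := by
    rw [Finset.sum_filter, ← Finset.sum_sub_distrib, Finset.mul_sum]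
    exact Finset.sum_congr rfl fun n _ => by by_cases hN : n ∈ N <;> simp [a, hN, mul_comm]
  have hmono : ∑ n ∈ Finset.Ioc w m, P.real {ω | n ≤ τ ω} ≤ ∑ n ∈ Finset.Ioc w m, A n :=
    Finset.sum_le_sum fun n _ => measureReal_mono fun ω (h : n ≤ τ ω) => (Nat.sub_le n w).trans h
  have hdensity := sum_measureReal_mem_le (P := P) hτm hd m
  have hwindow := sum_measureReal_window_le (P := P) (w := w) hτm m
  have hsteps := (Finset.sum_le_sum hstep).trans
    (sum_setIntegral_le_integral_firstPassage hS hY hτm hτ hint hm)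
  rw [Finset.sum_sub_distrib, hsum_a, ← Finset.sum_mul] at hsteps
  nlinarith [mul_le_mul_of_nonneg_left hmono (mul_nonneg hμstar (sub_nonneg.2 hρ)),
    mul_le_mul_of_nonneg_left hdensity hμstar, mul_le_mul_of_nonneg_left hwindow hμ]

lemma setIntegral_eq_sq_le [IsFiniteMeasure P] (hSa : Adapted 𝒢 S)
    (hτ : ∀ᵐ ω ∂P, IsFirstPassage S w b (τ ω) ω) {n : ℕ}
    (hY : Integrable (fun ω => Y n ω ^ 2) P) {v : ℝ}
    (hv : P[fun ω => Y n ω ^ 2 | 𝒢 (n - 1)] ≤ᵐ[P] fun _ => v) :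
    ∫ ω in {ω | τ ω = n}, Y n ω ^ 2 ∂P ≤ P.real {ω | n ≤ τ ω} * v := by
  calc ∫ ω in {ω | τ ω = n}, Y n ω ^ 2 ∂P ≤ ∫ ω in {ω | n ≤ τ ω}, Y n ω ^ 2 ∂P :=
        setIntegral_mono_set hY.integrableOn (ae_of_all _ fun ω => sq_nonneg _)
          (ae_of_all _ fun ω (h : τ ω = n) => h.ge)
    _ ≤ P.real {ω | n ≤ τ ω} * v := by
        rw [setIntegral_congr_set (ae_eq_notReachedBy hτ n),
          measureReal_congr (ae_eq_notReachedBy hτ n)]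
        exact setIntegral_le_mul_of_condExp_le (𝒢.le _) hY (measurableSet_notReachedBy hSa _) hv

lemma integral_sq_sum_indicator_le [IsFiniteMeasure P] (hSa : Adapted 𝒢 S)
    (hτm : Measurable τ) (hτ : ∀ᵐ ω ∂P, IsFirstPassage S w b (τ ω) ω)
    (hY : ∀ n, w < n → MemLp (Y n) 2 P) {v : ℝ}
    (hvar : ∀ n, w < n → P[fun ω => Y n ω ^ 2 | 𝒢 (n - 1)] ≤ᵐ[P] fun _ => v) (m : ℕ) :
    ∫ ω, (∑ n ∈ Finset.Ioc w m, {ω | τ ω = n}.indicator (Y n) ω) ^ 2 ∂P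
      ≤ ∑ n ∈ Finset.Ioc w m, P.real {ω | n ≤ τ ω} * v := by
  have hEq : ∀ n, MeasurableSet {ω | τ ω = n} := fun n => hτm (measurableSet_singleton n)
  have hsq : ∀ ω, (∑ n ∈ Finset.Ioc w m, {ω | τ ω = n}.indicator (Y n) ω) ^ 2
      = ∑ n ∈ Finset.Ioc w m, {ω | τ ω = n}.indicator (fun ω => Y n ω ^ 2) ω := by
    intro ω
    rw [sum_indicator_eq_ite, sum_indicator_eq_ite]
    split_ifs <;> simp
  simp_rw [hsq]
  rw [integral_finsetSum _ fun n hn =>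
    ((hY n (Finset.mem_Ioc.1 hn).1).integrable_sq).indicator (hEq n)]
  simp_rw [integral_indicator (hEq _)]
  exact Finset.sum_le_sum fun n hn => setIntegral_eq_sq_le hSa hτ
    (hY n (Finset.mem_Ioc.1 hn).1).integrable_sq (hvar n (Finset.mem_Ioc.1 hn).1)

lemma integral_overshoot_le_sqrt [IsProbabilityMeasure P]
    (hS : ∀ n ω, S n ω = ∑ i ∈ Finset.Ioc w n, Y i ω) (hSa : Adapted 𝒢 S)
    (hY : ∀ n, w < n → MemLp (Y n) 2 P) (hτm : Measurable τ)
    (hτ : ∀ᵐ ω ∂P, IsFirstPassage S w b (τ ω) ω) (hb : 0 < b) {v U : ℝ} (hv : 0 ≤ v)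
    (hvar : ∀ n, w < n → P[fun ω => Y n ω ^ 2 | 𝒢 (n - 1)] ≤ᵐ[P] fun _ => v)
    (hU : ∀ m, w < m → ∑ n ∈ Finset.Ioc w m, P.real {ω | n ≤ τ ω} ≤ U)
    (hint : Integrable (fun ω => S (τ ω) ω - b) P) :
    ∫ ω, (S (τ ω) ω - b) ∂P ≤ √(v * U) := by
  have hIic : ∀ m, MeasurableSet {ω | τ ω ≤ m} := fun m => hτm measurableSet_Iic
  set Z : ℕ → Ω → ℝ := fun m ω => ∑ n ∈ Finset.Ioc w m, {ω | τ ω = n}.indicator (Y n) ω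
  have hZ : ∀ m, MemLp (Z m) 2 P := fun m => memLp_finsetSum _ fun n hn =>
    (hY n (Finset.mem_Ioc.1 hn).1).indicator (hτm (measurableSet_singleton n))
  have htrunc : ∀ m, w < m → ∫ ω in {ω | τ ω ≤ m}, (S (τ ω) ω - b) ∂P ≤ √(v * U) := by
    intro m hm
    calc ∫ ω in {ω | τ ω ≤ m}, (S (τ ω) ω - b) ∂P ≤ ∫ ω, Z m ω ∂P := by
          rw [← integral_indicator (hIic m)]
          refine integral_mono_ae (hint.indicator (hIic m)) ((hZ m).integrable one_le_two) ?_
          filter_upwards [hτ] with ω hω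
          simp only [Z]
          rw [sum_indicator_eq_ite, Set.indicator_apply]
          split_ifs with hle hmem hmem'
          · exact hω.sub_le hS hb
          · exact absurd (Finset.mem_Ioc.2 ⟨hω.1, hle⟩) hmem
          · exact absurd (Finset.mem_Ioc.1 hmem').2 hle
          · exact le_rfl
      _ ≤ √(∫ ω, Z m ω ^ 2 ∂P) := integral_le_sqrt_integral_sq (hZ m)
      _ ≤ √(v * U) := Real.sqrt_le_sqrt <|
          (integral_sq_sum_indicator_le hSa hτm hτ hY hvar m).trans <| by
            rw [← Finset.sum_mul, mul_comm]; exact mul_le_mul_of_nonneg_left (hU m hm) hv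
  have hlim : Tendsto (fun m => ∫ ω in {ω | τ ω ≤ m}, (S (τ ω) ω - b) ∂P) atTop
      (nhds (∫ ω, (S (τ ω) ω - b) ∂P)) := by
    have hcover : ⋃ m, {ω | τ ω ≤ m} = univ :=
      eq_univ_of_forall fun ω => mem_iUnion.2 ⟨τ ω, (le_rfl : τ ω ≤ τ ω)⟩
    simpa [hcover] using tendsto_setIntegral_of_monotone hIic
      (fun i j hij ω (h : τ ω ≤ i) => h.trans hij) hint.integrableOn
  exact le_of_tendsto hlim ((eventually_gt_atTop w).mono htrunc)

end FirstPassage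

theorem expected_overshoot_bound_general
    {Ω : Type*} [m0 : MeasurableSpace Ω] (P : Measure Ω) [IsProbabilityMeasure P]
    (𝒢 : Filtration ℕ m0)
    (Y : ℕ → Ω → ℝ)
    (hY2 : ∀ n, 1 ≤ n → MemLp (Y n) 2 P)
    (hadp : ∀ n, 1 ≤ n → StronglyMeasurable[𝒢 n] (Y n))
    (w q : ℕ) (hqw : q < w)
    (N : Set ℕ)
    (μstar μlow μ v : ℝ)
    (hμstar : 0 < μstar) (hμlow : 0 < μlow) (hμ : 0 < μ) (hv : 0 < v)
    (haOut : ∀ n, w < n → n ∉ N →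
      (fun _ => μstar) ≤ᵐ[P] P[Y n | 𝒢 (n - w - 1)])
    (haIn : ∀ n, w < n → n ∈ N →
      (fun _ => μlow) ≤ᵐ[P] P[Y n | 𝒢 (n - w - 1)])
    (hbnd : ∀ n, w < n → P[Y n | 𝒢 (n - 1)] ≤ᵐ[P] (fun _ => μ))
    (hvar : ∀ n, w < n → P[(fun ω => (Y n ω) ^ 2) | 𝒢 (n - 1)] ≤ᵐ[P] (fun _ => v))
    (hd : ∀ (n : ℕ) (s : Finset ℕ),
      (∀ m ∈ s, m ∈ N ∧ m ∈ Finset.Ioc w (w + n)) → (s.card : ℝ) ≤ n * q / w)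
    (S : ℕ → Ω → ℝ) (hS : ∀ n ω, S n ω = ∑ i ∈ Finset.Ioc w n, Y i ω)
    (b : ℝ) (hb : 0 < b)
    (τ : Ω → ℕ) (hτmeas : Measurable τ)
    (hτ : ∀ᵐ ω ∂P, w < τ ω ∧ b ≤ S (τ ω) ω ∧ ∀ n, w < n → n < τ ω → S n ω < b)
    (K : ℝ) (hK : K = v / (μstar * (1 - (q : ℝ) / w))) :
    ∫ ω, (S (τ ω) ω - b) ∂P ≤ K + Real.sqrt (K * b) + Real.sqrt (K * (w * μ)) := by
  have hw : (0 : ℝ) < w := by exact_mod_cast (Nat.zero_le q).trans_lt hqw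
  have hρ : (q : ℝ) / w < 1 := (div_lt_one hw).2 (by exact_mod_cast hqw)
  have hc : 0 < μstar * (1 - (q : ℝ) / w) := mul_pos hμstar (sub_pos.2 hρ)
  have hK0 : 0 ≤ K := hK ▸ (div_pos hv hc).le
  by_cases hint : Integrable (fun ω => S (τ ω) ω - b) P
  swap
  · rw [integral_undef hint]; positivity
  have hY : ∀ n, w < n → MemLp (Y n) 2 P := fun n hn => hY2 n (by omega)
  have hSa : Adapted 𝒢 S := adapted_of_eq_sum_Ioc (fun n hn => hadp n (by omega)) hS
  set r := ∫ ω, (S (τ ω) ω - b) ∂P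
  have htail : ∀ m, w < m → ∑ n ∈ Finset.Ioc w m, P.real {ω | n ≤ τ ω}
      ≤ (b + r + μ * w) / (μstar * (1 - (q : ℝ) / w)) := fun m hm =>
    (le_div_iff₀' hc).2 <| mul_sum_measureReal_le_integral_add hS hSa
      (fun n hn => (hY n hn).integrable one_le_two) hτmeas hτ hint hμstar.le hμlow.le hμ.le
      hρ.le haOut haIn hbnd (fun n s hs => (hd n s hs).trans_eq (mul_div_assoc _ _ _)) hm
  have hr0 : 0 ≤ r := integral_nonneg_of_ae (hτ.mono fun ω h => sub_nonneg.2 h.2.1)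
  have hr := integral_overshoot_le_sqrt hS hSa hY hτmeas hτ hb hv.le hvar htail hint
  refine le_add_sqrt_add_sqrt_of_sq_le hK0 hb.le (by positivity) ?_
  calc r ^ 2 ≤ v * ((b + r + μ * w) / (μstar * (1 - (q : ℝ) / w))) :=
        (pow_le_pow_left₀ hr0 hr 2).trans_eq <| Real.sq_sqrt <| by positivity
    _ = K * (b + r + w * μ) := by rw [hK]; ring

/-- The expected overshoot `R_b = S_{τ_b} - b` at the hitting time
`τ_b = inf {n > w : S_n ≥ b}` satisfies `E[R_b] ≤ K + √(Kb) + √(Kwμ)`,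
where `K = v / (μ* (1 - q/w))`. -/
theorem expected_overshoot_bound
    {Ω : Type*} [m0 : MeasurableSpace Ω] (P : Measure Ω) [IsProbabilityMeasure P]
    (𝒢 : Filtration ℕ m0) (h𝒢0 : 𝒢 0 = ⊥)
    (Y : ℕ → Ω → ℝ)
    (hY2 : ∀ n, 1 ≤ n → MemLp (Y n) 2 P)
    (hadp : ∀ n, 1 ≤ n → StronglyMeasurable[𝒢 n] (Y n))
    (w q : ℕ) (hq : 0 < q) (hqw : q < w)
    (N : Set ℕ) (hN : ∀ m ∈ N, w < m)
    (μstar μlow μ v : ℝ)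
    (hμstar : 0 < μstar) (hμlow : 0 < μlow) (hμ : 0 < μ) (hv : 0 < v)
    (haOut : ∀ n, w < n → n ∉ N →
      (fun _ => μstar) ≤ᵐ[P] P[Y n | 𝒢 (n - w - 1)])
    (haIn : ∀ n, w < n → n ∈ N →
      (fun _ => μlow) ≤ᵐ[P] P[Y n | 𝒢 (n - w - 1)])
    (hbnd : ∀ n, w < n → P[Y n | 𝒢 (n - 1)] ≤ᵐ[P] (fun _ => μ))
    (hvar : ∀ n, w < n → P[(fun ω => (Y n ω) ^ 2) | 𝒢 (n - 1)] ≤ᵐ[P] (fun _ => v))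
    (hd : ∀ (n : ℕ) (s : Finset ℕ),
      (∀ m ∈ s, m ∈ N ∧ m ∈ Finset.Ioc w (w + n)) → (s.card : ℝ) ≤ n * q / w)
    (S : ℕ → Ω → ℝ) (hS : ∀ n ω, S n ω = ∑ i ∈ Finset.Ioc w n, Y i ω)
    (b : ℝ) (hb : 0 < b)
    (τ : Ω → ℕ) (hτmeas : Measurable τ)
    (hτ : ∀ᵐ ω ∂P, w < τ ω ∧ b ≤ S (τ ω) ω ∧ ∀ n, w < n → n < τ ω → S n ω < b)
    (K : ℝ) (hK : K = v / (μstar * (1 - (q : ℝ) / w))) :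
    ∫ ω, (S (τ ω) ω - b) ∂P ≤ K + Real.sqrt (K * b) + Real.sqrt (K * (w * μ)) :=
  expected_overshoot_bound_general (m0 := m0) P 𝒢 Y hY2 hadp w q hqw N μstar μlow μ v hμstar hμlow
    hμ hv haOut haIn hbnd hvar hd S hS b hb τ hτmeas hτ K hK
end
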